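/- Fix θ ∈ ℝ and σ > 0. There exists a unique p > 0 satisfying p·φ((θ−p)/σ) = σ·Φ((θ−p)/σ). Moreover this p is the unique global maximizer of the expected profit function p ↦ p·Φ((θ−p)/σ) over (0, ∞). -/

import Mathlib

noncomputable section

open MeasureTheory Real Set Filter

/-- standard normal pdf φ -/
def stdPdf (x : ℝ) : ℝ := (Real.sqrt (2 * Real.pi))⁻¹ * Real.exp (-(x ^ 2) / 2)

/-- standard normal cdf Φ -/
def stdCdf (x : ℝ) : ℝ := ∫ t in Set.Iic x, stdPdf t

/-- posterior expected reward  E[r ‖ x] = ∫ r(v) φ((v-μ_x)/σ_v)/σ_v dv, where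
    μ_x = τ x + (1-τ) θ, τ = σθ²/(σε²+σθ²), σ_v = σε σθ / √(σε²+σθ²). -/
def postReward (θ σε σθ : ℝ) (r : ℝ → ℝ) (x : ℝ) : ℝ :=
  ∫ v, r v * stdPdf ((v - (σθ ^ 2 / (σε ^ 2 + σθ ^ 2) * x +
      (1 - σθ ^ 2 / (σε ^ 2 + σθ ^ 2)) * θ)) / (σε * σθ / Real.sqrt (σε ^ 2 + σθ ^ 2))) /
    (σε * σθ / Real.sqrt (σε ^ 2 + σθ ^ 2))

/-- expected profit  Π(p, r, c) = ∫ (p - r(v)) Φ((v-c)/σε) φ((θ-v)/σθ)/σθ dv. -/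
def profit (θ σε σθ : ℝ) (p : ℝ) (r : ℝ → ℝ) (c : ℝ) : ℝ :=
  ∫ v, (p - r v) * stdCdf ((v - c) / σε) * stdPdf ((θ - v) / σθ) / σθ

lemma stdPdf_pos (x : ℝ) : 0 < stdPdf x := by
  have h : 0 < Real.sqrt (2 * Real.pi) := Real.sqrt_pos.2 (by positivity)
  unfold stdPdf; positivity

lemma continuous_stdPdf : Continuous stdPdf := by unfold stdPdf; fun_prop

lemma integrable_stdPdf : Integrable stdPdf := by
  have h : Integrable (fun x : ℝ => Real.exp (-(1/2 : ℝ) * x ^ 2)) :=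
    integrable_exp_neg_mul_sq (by norm_num)
  have h2 := h.const_mul (Real.sqrt (2 * Real.pi))⁻¹
  have he : stdPdf = fun x => (Real.sqrt (2 * Real.pi))⁻¹ * Real.exp (-(1/2 : ℝ) * x ^ 2) := by
    funext x; unfold stdPdf; ring_nf
  rw [he]; exact h2

lemma hasDerivAt_stdPdf (x : ℝ) : HasDerivAt stdPdf (-x * stdPdf x) x := by
  have h : HasDerivAt (fun y : ℝ => -(y ^ 2) / 2) (-x) x := by
    have := ((hasDerivAt_pow 2 x).neg).div_const 2
    refine this.congr_deriv ?_; push_cast; ring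
  have h2 := (h.exp).const_mul (Real.sqrt (2 * Real.pi))⁻¹
  have hval : -x * stdPdf x =
      (Real.sqrt (2 * Real.pi))⁻¹ * (Real.exp (-(x ^ 2) / 2) * -x) := by
    unfold stdPdf; ring
  exact hval ▸ h2

lemma hasDerivAt_stdCdf (x : ℝ) : HasDerivAt stdCdf (stdPdf x) x := by
  have hi : ∀ a b : ℝ, IntervalIntegrable stdPdf volume a b :=
    fun a b => integrable_stdPdf.intervalIntegrable
  have h : HasDerivAt (fun u => ∫ t in (0:ℝ)..u, stdPdf t) (stdPdf x) x :=
    intervalIntegral.integral_hasDerivAt_right (hi 0 x)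
      (continuous_stdPdf.stronglyMeasurable.stronglyMeasurableAtFilter)
      continuous_stdPdf.continuousAt
  have h2 := h.const_add (stdCdf 0)
  have he : ∀ y : ℝ, stdCdf y = stdCdf 0 + ∫ t in (0:ℝ)..y, stdPdf t := by
    intro y
    have := intervalIntegral.integral_Iic_sub_Iic (μ := volume) (f := stdPdf)
      (a := (0:ℝ)) (b := y) integrable_stdPdf.integrableOn integrable_stdPdf.integrableOn
    unfold stdCdf
    linarith [this]
  exact h2.congr_of_eventuallyEq (Filter.Eventually.of_forall he)

lemma stdCdf_pos (x : ℝ) : 0 < stdCdf x := by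
  unfold stdCdf
  rw [setIntegral_pos_iff_support_of_nonneg_ae
    (Filter.Eventually.of_forall fun t => (stdPdf_pos t).le) integrable_stdPdf.integrableOn]
  have hsub : Set.Ioo (x - 1) x ⊆ Function.support stdPdf ∩ Set.Iic x := by
    intro t ht
    exact ⟨(stdPdf_pos t).ne', ht.2.le⟩
  calc (0 : ENNReal) < volume (Set.Ioo (x - 1) x) := by
        rw [Real.volume_Ioo]; norm_num
    _ ≤ _ := measure_mono hsub

lemma stdPdf_le_exp {t : ℝ} (ht : t ≤ -2) :
    stdPdf t ≤ (Real.sqrt (2 * Real.pi))⁻¹ * Real.exp t := by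
  have h : -(t ^ 2) / 2 ≤ t := by nlinarith
  have := Real.exp_le_exp.2 h
  have hc : 0 < (Real.sqrt (2 * Real.pi))⁻¹ := by
    have : 0 < Real.sqrt (2 * Real.pi) := Real.sqrt_pos.2 (by positivity)
    positivity
  unfold stdPdf
  nlinarith [Real.exp_pos t]

lemma stdCdf_le_exp {x : ℝ} (hx : x ≤ -2) :
    stdCdf x ≤ (Real.sqrt (2 * Real.pi))⁻¹ * Real.exp x := by
  have h1 : stdCdf x ≤ ∫ t in Set.Iic x, (Real.sqrt (2 * Real.pi))⁻¹ * Real.exp t := by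
    unfold stdCdf
    refine setIntegral_mono_on integrable_stdPdf.integrableOn
      ((integrableOn_exp_Iic x).const_mul _) measurableSet_Iic fun t ht => ?_
    exact stdPdf_le_exp (le_trans ht hx)
  calc stdCdf x ≤ _ := h1
    _ = (Real.sqrt (2 * Real.pi))⁻¹ * Real.exp x := by
        rw [integral_const_mul, integral_exp_Iic]

lemma tendsto_stdPdf_atBot : Tendsto stdPdf atBot (nhds 0) := by
  have hexp : Tendsto (fun x : ℝ => (Real.sqrt (2 * Real.pi))⁻¹ * Real.exp x) atBot (nhds 0) := by
    have := Real.tendsto_exp_atBot.const_mul ((Real.sqrt (2 * Real.pi))⁻¹)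
    simpa using this
  refine tendsto_of_tendsto_of_tendsto_of_le_of_le' tendsto_const_nhds hexp ?_ ?_
  · exact Filter.Eventually.of_forall fun t => (stdPdf_pos t).le
  · filter_upwards [eventually_le_atBot (-2 : ℝ)] with t ht
    exact stdPdf_le_exp ht

lemma tendsto_mul_stdCdf_atBot : Tendsto (fun x => x * stdCdf x) atBot (nhds 0) := by
  have key : Tendsto (fun x : ℝ => x * ((Real.sqrt (2 * Real.pi))⁻¹ * Real.exp x)) atBot (nhds 0) := by
    have h1 : Tendsto (fun y : ℝ => y ^ 1 * Real.exp (-y)) atTop (nhds 0) :=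
      tendsto_pow_mul_exp_neg_atTop_nhds_zero 1
    have h2 : Tendsto (fun x : ℝ => -(x * Real.exp x)) atBot (nhds 0) := by
      have := h1.comp tendsto_neg_atBot_atTop
      simpa [Function.comp_def] using this
    have h3 : Tendsto (fun x : ℝ => x * Real.exp x) atBot (nhds 0) := by
      simpa using h2.neg
    have h4 := h3.const_mul ((Real.sqrt (2 * Real.pi))⁻¹)
    simp only [mul_zero] at h4
    exact h4.congr fun x => by ring
  refine tendsto_of_tendsto_of_tendsto_of_le_of_le' key tendsto_const_nhds ?_ ?_
  · filter_upwards [eventually_le_atBot (-2 : ℝ)] with x hx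
    have h := stdCdf_le_exp hx
    have hxneg : x ≤ 0 := by linarith
    nlinarith [stdCdf_pos x]
  · filter_upwards [eventually_le_atBot (0 : ℝ)] with x hx
    nlinarith [stdCdf_pos x]

lemma hasDerivAt_W (x : ℝ) :
    HasDerivAt (fun y => stdPdf y + y * stdCdf y) (stdCdf x) x := by
  have h := (hasDerivAt_stdPdf x).add ((hasDerivAt_id x).mul (hasDerivAt_stdCdf x))
  refine h.congr_deriv ?_
  simp only [id_eq]
  ring

lemma W_pos (x : ℝ) : 0 < stdPdf x + x * stdCdf x := by
  set W : ℝ → ℝ := fun y => stdPdf y + y * stdCdf y with hW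
  have hmono : StrictMono W := by
    refine strictMono_of_deriv_pos fun y => ?_
    rw [(hasDerivAt_W y).deriv]
    exact stdCdf_pos y
  have hlim : Tendsto W atBot (nhds 0) := by
    have := tendsto_stdPdf_atBot.add tendsto_mul_stdCdf_atBot
    simpa using this
  have hnonneg : ∀ y, 0 ≤ W y := by
    intro y
    refine le_of_tendsto hlim ?_
    filter_upwards [eventually_le_atBot y] with z hz
    exact hmono.monotone hz
  calc (0:ℝ) ≤ W (x - 1) := hnonneg _
    _ < W x := hmono (by linarith)

lemma hasDerivAt_ratio (y : ℝ) :
    HasDerivAt (fun t => stdCdf t / stdPdf t)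
      ((stdPdf y + y * stdCdf y) / stdPdf y) y := by
  have hφ := (stdPdf_pos y).ne'
  have h := (hasDerivAt_stdCdf y).div (hasDerivAt_stdPdf y) hφ
  refine h.congr_deriv ?_
  field_simp
  ring

/-- existence and uniqueness of an optimal price p > 0 satisfying the
    first-order condition p·φ((θ-p)/σ) = σ·Φ((θ-p)/σ), and that this p is the unique
    global maximizer of p ↦ p·Φ((θ-p)/σ) over (0, ∞). -/
theorem stmt_15 (θ σ : ℝ) (hσ : 0 < σ) :
    ∃ p : ℝ, (0 < p ∧ p * stdPdf ((θ - p) / σ) = σ * stdCdf ((θ - p) / σ)) ∧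
      (∀ q : ℝ, 0 < q → q * stdPdf ((θ - q) / σ) = σ * stdCdf ((θ - q) / σ) → q = p) ∧
      (∀ q : ℝ, 0 < q → q ≠ p →
        q * stdCdf ((θ - q) / σ) < p * stdCdf ((θ - p) / σ)) := by
  set x : ℝ → ℝ := fun p => (θ - p) / σ with hxdef
  have hx : ∀ p : ℝ, HasDerivAt x (-1 / σ) p := by
    intro p
    have := ((hasDerivAt_id p).const_sub θ).div_const σ
    simpa using this
  set R : ℝ → ℝ := fun p => p - σ * (stdCdf (x p) / stdPdf (x p)) with hRdef
  have hR' : ∀ p : ℝ, HasDerivAt R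
      (1 + (stdPdf (x p) + x p * stdCdf (x p)) / stdPdf (x p)) p := by
    intro p
    have hcomp := (hasDerivAt_ratio (x p)).comp p (hx p)
    have h := (hasDerivAt_id p).sub (hcomp.const_mul σ)
    refine h.congr_deriv ?_
    have hφ := (stdPdf_pos (x p)).ne'
    field_simp
    ring
  have hRpos : ∀ p : ℝ, 0 < deriv R p := by
    intro p
    rw [(hR' p).deriv]
    have := W_pos (x p)
    have := stdPdf_pos (x p)
    positivity
  have hRmono : StrictMono R := strictMono_of_deriv_pos hRpos
  have hRcont : Continuous R := by
    refine continuous_iff_continuousAt.2 fun p => (hR' p).differentiableAt.continuousAt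
  -- S = R - id is monotone
  have hSmono : Monotone (fun p => R p - p) := by
    refine monotone_of_deriv_nonneg (fun p => ((hR' p).sub (hasDerivAt_id' p)).differentiableAt)
      fun p => ?_
    rw [HasDerivAt.deriv (f := fun p => R p - p) ((hR' p).sub (hasDerivAt_id' p))]
    have h1 : 0 < (stdPdf (x p) + x p * stdCdf (x p)) / stdPdf (x p) :=
      div_pos (W_pos _) (stdPdf_pos _)
    linarith
  have hR0 : R 0 < 0 := by
    have h1 : 0 < stdCdf (x 0) / stdPdf (x 0) := div_pos (stdCdf_pos _) (stdPdf_pos _)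
    simp only [hRdef]
    nlinarith
  set b : ℝ := -R 0 + 1 with hbdef
  have hRb : 0 < R b := by
    have h := hSmono (show (0:ℝ) ≤ b by nlinarith)
    simp only at h
    nlinarith
  obtain ⟨p, hpmem, hRp⟩ : ∃ p ∈ Set.Icc (0:ℝ) b, R p = 0 := by
    have hab : (0:ℝ) ≤ b := by nlinarith
    have := intermediate_value_Icc hab hRcont.continuousOn
    have h0 : (0:ℝ) ∈ Set.Icc (R 0) (R b) := ⟨hR0.le, hRb.le⟩
    obtain ⟨p, hp, hp0⟩ := this h0
    exact ⟨p, hp, hp0⟩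
  have hppos : 0 < p := by
    rcases eq_or_lt_of_le hpmem.1 with h | h
    · exfalso; rw [← h] at hRp; linarith
    · exact h
  -- FOC equivalence
  have hfoc : ∀ q : ℝ, (q * stdPdf (x q) = σ * stdCdf (x q)) ↔ R q = 0 := by
    intro q
    have hφ := (stdPdf_pos (x q)).ne'
    simp only [hRdef]
    rw [sub_eq_zero]
    constructor
    · intro h
      field_simp
      linarith [h]
    · intro h
      field_simp at h
      linarith [h]
  -- profit function
  set f : ℝ → ℝ := fun q => q * stdCdf (x q) with hfdef
  have hf' : ∀ q : ℝ, HasDerivAt f (-(stdPdf (x q) / σ) * R q) q := by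
    intro q
    have hcomp := (hasDerivAt_stdCdf (x q)).comp q (hx q)
    have h := (hasDerivAt_id q).mul hcomp
    refine h.congr_deriv ?_
    have hφ := (stdPdf_pos (x q)).ne'
    simp only [hRdef]
    field_simp
    simp only [Function.comp_apply, id_eq]; ring
  have hfc : Continuous f := continuous_iff_continuousAt.2
    fun q => (hf' q).differentiableAt.continuousAt
  have hmonoIcc : StrictMonoOn f (Set.Icc 0 p) := by
    refine strictMonoOn_of_deriv_pos (convex_Icc 0 p) hfc.continuousOn fun q hq => ?_
    rw [interior_Icc] at hq
    rw [(hf' q).deriv]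
    have hRq : R q < 0 := by
      have := hRmono hq.2
      rw [hRp] at this
      exact this
    have hφ := stdPdf_pos (x q)
    have hpr : 0 < stdPdf (x q) / σ := div_pos hφ hσ
    nlinarith [mul_pos hpr (neg_pos.2 hRq)]
  have hantiIci : StrictAntiOn f (Set.Ici p) := by
    refine strictAntiOn_of_deriv_neg (convex_Ici p) hfc.continuousOn fun q hq => ?_
    rw [interior_Ici] at hq
    rw [(hf' q).deriv]
    have hRq : 0 < R q := by
      have := hRmono hq
      rw [hRp] at this
      exact this
    have hφ := stdPdf_pos (x q)
    have hpr : 0 < stdPdf (x q) / σ := div_pos hφ hσ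
    nlinarith [mul_pos hpr hRq]
  refine ⟨p, ⟨hppos, (hfoc p).2 hRp⟩, ?_, ?_⟩
  · intro q hq hqfoc
    exact hRmono.injective (by rw [(hfoc q).1 hqfoc, hRp])
  · intro q hq hqne
    rcases lt_or_gt_of_ne hqne with h | h
    · exact hmonoIcc ⟨hq.le, h.le⟩ ⟨hppos.le, le_refl p⟩ h
    · exact hantiIci (le_refl p) h.le h
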